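/- For every A ⊆ ℕ∖{0}, one has φ₁(A ∖ [0,m)) → 0 as m → ∞ if and only if |A ∩ [1,n]|/n → 0 as n → ∞; that is, the first Schreier ideal 𝓘₁ = Exh(φ₁) equals the density zero ideal 𝒵. -/

import Mathlib

set_option maxHeartbeats 1000000


open Filter Topology ENNReal

/-- `λ_k = 2^{-n}` for `k ∈ [2^n, 2^{n+1})` (for `k ≥ 1`). -/
noncomputable def lam : ℕ → ℝ := fun k => (1 / 2 : ℝ) ^ (Nat.log 2 k)

/-- The Schreier family `S₁ = {∅} ∪ {F ⊆ ℕ∖{0} finite nonempty : |F| ≤ min F}`;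
note that `|F| ≤ min F` is equivalent to `∀ k ∈ F, |F| ≤ k`. -/
def S1 : Set (Finset ℕ) := {F | 0 ∉ F ∧ ∀ k ∈ F, F.card ≤ k}

/-- `φ₁(A) = sup_{F ∈ S₁} Σ_{k ∈ F ∩ A} λ_k`. -/
noncomputable def phi1 (A : Set ℕ) : ℝ≥0∞ :=
  ⨆ F ∈ S1, ∑ k ∈ F, A.indicator (fun k => ENNReal.ofReal (lam k)) k

/-- The second Schreier family: unions `E₁ ∪ ⋯ ∪ E_m` of nonempty members of `S₁`
with `m ≤ min E₁` and `max E_j < min E_{j+1}`. -/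
def S2 : Set (Finset ℕ) :=
  {F | F = ∅ ∨ ∃ (m : ℕ) (E : Fin (m + 1) → Finset ℕ),
    (∀ j, E j ∈ S1 ∧ (E j).Nonempty) ∧
    (∀ j k : Fin (m + 1), j < k → ∀ a ∈ E j, ∀ b ∈ E k, a < b) ∧
    (∀ a ∈ E 0, m + 1 ≤ a) ∧
    F = Finset.univ.biUnion E}

/-- `φ₂(A) = sup_{F ∈ S₂} Σ_{k ∈ F ∩ A} λ_k`. -/
noncomputable def phi2 (A : Set ℕ) : ℝ≥0∞ :=
  ⨆ F ∈ S2, ∑ k ∈ F, A.indicator (fun k => ENNReal.ofReal (lam k)) k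

lemma lam_le (k : ℕ) (hk : 1 ≤ k) : lam k ≤ 2 / k := by
  have h1 : (k : ℝ) < 2 ^ (Nat.log 2 k + 1) := by
    exact_mod_cast Nat.lt_pow_succ_log_self (by norm_num) k
  have h2 : (0:ℝ) < 2 ^ (Nat.log 2 k) := by positivity
  have hk0 : (0:ℝ) < k := by exact_mod_cast hk
  rw [lam, div_pow, one_pow, div_le_div_iff₀ h2 hk0]
  rw [pow_succ] at h1
  nlinarith


lemma le_lam (k : ℕ) (hk : 1 ≤ k) : 1 / (k:ℝ) ≤ lam k := by
  have h1 : (2:ℝ) ^ (Nat.log 2 k) ≤ k := by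
    exact_mod_cast Nat.pow_log_le_self 2 (by omega)
  have h2 : (0:ℝ) < 2 ^ (Nat.log 2 k) := by positivity
  have hk0 : (0:ℝ) < k := by exact_mod_cast hk
  rw [lam, div_pow, one_pow, div_le_div_iff₀ hk0 h2]
  nlinarith


lemma lam_nonneg (k : ℕ) : 0 ≤ lam k := by rw [lam]; positivity


lemma phi1_tail_ge (A : Set ℕ) (ε : ℝ) (hε : 0 < ε) (m n : ℕ)
    (hn : (8 * ((m:ℝ) + 3)) ≤ ε * n) (hεn : ε * n ≤ ((A ∩ Set.Icc 1 n).ncard : ℝ)) :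
    ENNReal.ofReal (ε / 8) ≤ phi1 (A \ Set.Iio m) := by
  classical
  set Bf : Finset ℕ := (Finset.Icc 1 n).filter (· ∈ A) with hBfdef
  have hBf : (A ∩ Set.Icc 1 n).ncard = Bf.card := by
    rw [← Set.ncard_coe_finset]
    congr 1
    ext k
    simp only [hBfdef, Finset.coe_filter, Finset.mem_Icc, Set.mem_inter_iff, Set.mem_Icc,
      Set.mem_setOf_eq]
    tauto
  set c := Bf.card with hcdef
  have hc : ε * n ≤ (c:ℝ) := by rwa [hBf] at hεn
  have hn0 : 0 < n := by
    rcases Nat.eq_zero_or_pos n with h | h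
    · exfalso; rw [h] at hn; push_cast at hn; nlinarith
    · exact h
  set p := m + c / 2 with hpdef
  -- card of B' bound
  set B' : Finset ℕ := Bf.filter (fun k => p < k) with hB'def
  have hsplit : (Bf.filter (fun k => p < k)).card + (Bf.filter (fun k => ¬ p < k)).card = c :=
    Finset.card_filter_add_card_filter_not _
  have hsmall : (Bf.filter (fun k => ¬ p < k)).card ≤ p := by
    have hsub : Bf.filter (fun k => ¬ p < k) ⊆ Finset.Icc 1 p := by
      intro k hk
      simp only [Finset.mem_filter, hBfdef, Finset.mem_Icc] at hk ⊢
      omega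
    calc _ ≤ (Finset.Icc 1 p).card := Finset.card_le_card hsub
    _ = p := by simp
  have hB'card : c - p ≤ B'.card := by rw [hB'def]; omega
  set d := min B'.card (p + 1) with hddef
  obtain ⟨F, hFB', hFcard⟩ := Finset.exists_subset_card_eq (min_le_left B'.card (p+1))
  have hFmem : ∀ k ∈ F, k ∈ A ∧ 1 ≤ k ∧ k ≤ n ∧ p < k := by
    intro k hk
    have := hFB' hk
    simp only [hB'def, Finset.mem_filter, hBfdef, Finset.mem_Icc] at this
    tauto
  have hFS1 : F ∈ S1 := by
    constructor
    · intro h0; have := hFmem 0 h0; omega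
    · intro k hk
      have := hFmem k hk
      rw [hFcard]; omega
  -- lower bound on sum
  have hdn : ε * n / 8 ≤ (d:ℝ) := by
    have h1 : (↑c - ↑p : ℝ) ≤ (B'.card : ℝ) := by
      calc (↑c - ↑p : ℝ) ≤ ((c - p : ℕ) : ℝ) := by
            rcases le_total p c with h | h
            · rw [Nat.cast_sub h]
            · have : (c:ℝ) ≤ p := by exact_mod_cast h
              have : ((c-p:ℕ):ℝ) = 0 := by
                rw [Nat.sub_eq_zero_of_le h]; simp
              linarith [this]
      _ ≤ (B'.card : ℝ) := by exact_mod_cast hB'card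
    have hhalf : ((c/2 : ℕ):ℝ) ≤ (c:ℝ)/2 := by
      have h2 : 2 * (c/2) ≤ c := by omega
      have := (Nat.cast_le (α := ℝ)).mpr h2
      push_cast at this
      linarith
    have hhalf2 : (c:ℝ)/2 - 1 ≤ ((c/2 : ℕ):ℝ) := by
      have h2 : c ≤ 2 * (c/2) + 1 := by omega
      have := (Nat.cast_le (α := ℝ)).mpr h2
      push_cast at this
      linarith
    have hp : (p:ℝ) ≤ m + (c:ℝ) / 2 := by
      rw [hpdef]; push_cast [Nat.cast_add]
      linarith
    have hp2 : (c:ℝ) / 2 - 1 ≤ (p:ℝ) := by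
      rw [hpdef]; push_cast [Nat.cast_add]
      linarith
    have hm : (8:ℝ) * (m + 3) ≤ c := le_trans hn hc
    have hd1 : ε * n / 8 ≤ (B'.card : ℝ) := by nlinarith
    have hd2 : ε * n / 8 ≤ ((p:ℝ) + 1) := by nlinarith
    rw [hddef]; push_cast
    exact le_min hd1 hd2
  -- the sum over F
  have hsum : ENNReal.ofReal (ε/8) ≤ ∑ k ∈ F, (A \ Set.Iio m).indicator (fun k => ENNReal.ofReal (lam k)) k := by
    have heq : ∀ k ∈ F, (A \ Set.Iio m).indicator (fun k => ENNReal.ofReal (lam k)) k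
        = ENNReal.ofReal (lam k) := by
      intro k hk
      have h := hFmem k hk
      apply Set.indicator_of_mem
      refine ⟨h.1, ?_⟩
      simp only [Set.mem_Iio, not_lt]
      omega
    rw [Finset.sum_congr rfl heq]
    have hterm : ∀ k ∈ F, ENNReal.ofReal (1 / (n:ℝ)) ≤ ENNReal.ofReal (lam k) := by
      intro k hk
      have h := hFmem k hk
      apply ENNReal.ofReal_le_ofReal
      calc (1:ℝ)/n ≤ 1/k := by
            apply one_div_le_one_div_of_le
            · exact_mod_cast h.2.1
            · exact_mod_cast h.2.2.1
      _ ≤ lam k := le_lam k h.2.1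
    have hFd : F.card = d := hFcard.trans hddef.symm
    calc ENNReal.ofReal (ε/8) ≤ F.card • ENNReal.ofReal (1/(n:ℝ)) := by
          rw [hFd, nsmul_eq_mul, ← ENNReal.ofReal_natCast,
            ← ENNReal.ofReal_mul (Nat.cast_nonneg d)]
          apply ENNReal.ofReal_le_ofReal
          have hn' : (0:ℝ) < n := by exact_mod_cast hn0
          rw [mul_one_div, le_div_iff₀ hn']
          have : ε * n / 8 ≤ (d:ℝ) := hdn
          nlinarith
    _ ≤ ∑ k ∈ F, ENNReal.ofReal (lam k) := Finset.card_nsmul_le_sum F _ _ hterm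
  calc ENNReal.ofReal (ε/8) ≤ _ := hsum
  _ ≤ phi1 (A \ Set.Iio m) := le_iSup₂_of_le F hFS1 le_rfl

lemma phi1_tail_le (A : Set ℕ) (m s N : ℕ) (δ : ℝ) (hδ : 0 ≤ δ) (hm : 1 ≤ m) (hmN : N ≤ m)
    (hd : ∀ n, N ≤ n → ((A ∩ Set.Icc 1 n).ncard : ℝ) ≤ δ * n) :
    phi1 (A \ Set.Iio m) ≤ ENNReal.ofReal (2 ^ (s+1) * δ + 2 / 2 ^ s) := by
  classical
  rw [phi1]
  apply iSup₂_le
  intro F hF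
  -- reduce to the filtered set
  have hsum : ∑ k ∈ F, (A \ Set.Iio m).indicator (fun k => ENNReal.ofReal (lam k)) k
      = ∑ k ∈ F.filter (fun k => k ∈ A \ Set.Iio m), ENNReal.ofReal (lam k) := by
    rw [Finset.sum_filter]
    apply Finset.sum_congr rfl
    intro k _
    by_cases hk : k ∈ A \ Set.Iio m
    · rw [Set.indicator_of_mem hk, if_pos hk]
    · rw [Set.indicator_of_notMem hk, if_neg hk]
  rw [hsum]
  set F' := F.filter (fun k => k ∈ A \ Set.Iio m) with hF'def
  rcases Finset.eq_empty_or_nonempty F' with he | hne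
  · rw [he, Finset.sum_empty]; positivity
  set q := F'.min' hne with hqdef
  have hqF' : q ∈ F' := F'.min'_mem hne
  have hmemF' : ∀ k ∈ F', k ∈ A ∧ m ≤ k ∧ q ≤ k := by
    intro k hk
    have h1 := Finset.mem_filter.mp hk
    have h2 := F'.min'_le k hk
    simp only [Set.mem_diff, Set.mem_Iio, not_lt] at h1
    exact ⟨h1.2.1, h1.2.2, h2⟩
  have hmq : m ≤ q := (hmemF' q hqF').2.1
  have hq1 : 1 ≤ q := le_trans hm hmq
  have hcard : F'.card ≤ q := by
    have := hF.2 q (Finset.mem_filter.mp hqF').1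
    exact le_trans (Finset.card_le_card (Finset.filter_subset _ F)) this
  have hq0 : (0:ℝ) < q := by exact_mod_cast hq1
  -- split
  rw [← Finset.sum_filter_add_sum_filter_not F' (fun k => k < 2 ^ s * q)]
  have hb1 : ∑ k ∈ F'.filter (fun k => k < 2 ^ s * q), ENNReal.ofReal (lam k)
      ≤ ENNReal.ofReal (2 ^ (s+1) * δ) := by
    have hsub : ↑(F'.filter (fun k => k < 2 ^ s * q)) ⊆ A ∩ Set.Icc 1 (2 ^ s * q) := by
      intro k hk
      simp only [Finset.coe_filter, Set.mem_setOf_eq] at hk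
      obtain ⟨hk1, hk2⟩ := hk
      have h := hmemF' k hk1
      exact ⟨h.1, le_trans hq1 h.2.2, by omega⟩
    have hcard1 : ((F'.filter (fun k => k < 2 ^ s * q)).card : ℝ) ≤ δ * (2 ^ s * q) := by
      have hfin : (A ∩ Set.Icc 1 (2 ^ s * q)).Finite :=
        (Set.finite_Icc 1 (2 ^ s * q)).subset Set.inter_subset_right
      have h1 : (F'.filter (fun k => k < 2 ^ s * q)).card ≤ (A ∩ Set.Icc 1 (2 ^ s * q)).ncard := by
        rw [← Set.ncard_coe_finset]
        exact Set.ncard_le_ncard hsub hfin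
      have h2 := hd (2 ^ s * q) (by calc N ≤ m := hmN
                                        _ ≤ q := hmq
                                        _ ≤ 2 ^ s * q := Nat.le_mul_of_pos_left q (pow_pos (by norm_num) s))
      calc ((F'.filter (fun k => k < 2 ^ s * q)).card : ℝ) ≤ _ := by exact_mod_cast h1
        _ ≤ δ * ((2 ^ s * q : ℕ) : ℝ) := h2
        _ = δ * (2 ^ s * q) := by push_cast; ring
    calc ∑ k ∈ F'.filter (fun k => k < 2 ^ s * q), ENNReal.ofReal (lam k)
        ≤ ∑ _k ∈ F'.filter (fun k => k < 2 ^ s * q), ENNReal.ofReal (2 / q) := by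
          apply Finset.sum_le_sum
          intro k hk
          apply ENNReal.ofReal_le_ofReal
          have h := hmemF' k (Finset.mem_filter.mp hk).1
          calc lam k ≤ 2 / k := lam_le k (le_trans hq1 h.2.2)
            _ ≤ 2 / q := by
                apply div_le_div_of_nonneg_left (by norm_num) hq0
                exact_mod_cast h.2.2
      _ = (F'.filter (fun k => k < 2 ^ s * q)).card • ENNReal.ofReal (2 / q) := by
          rw [Finset.sum_const]
      _ ≤ ENNReal.ofReal (2 ^ (s+1) * δ) := by
          rw [nsmul_eq_mul, ← ENNReal.ofReal_natCast, ← ENNReal.ofReal_mul (Nat.cast_nonneg _)]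
          apply ENNReal.ofReal_le_ofReal
          calc ((F'.filter (fun k => k < 2 ^ s * q)).card : ℝ) * (2 / q)
              ≤ (δ * (2 ^ s * q)) * (2 / q) := by
                apply mul_le_mul_of_nonneg_right hcard1 (by positivity)
            _ = 2 ^ (s+1) * δ := by field_simp; ring
  have hb2 : ∑ k ∈ F'.filter (fun k => ¬ k < 2 ^ s * q), ENNReal.ofReal (lam k)
      ≤ ENNReal.ofReal (2 / 2 ^ s) := by
    calc ∑ k ∈ F'.filter (fun k => ¬ k < 2 ^ s * q), ENNReal.ofReal (lam k)
        ≤ ∑ _k ∈ F'.filter (fun k => ¬ k < 2 ^ s * q), ENNReal.ofReal (2 / (2 ^ s * q)) := by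
          apply Finset.sum_le_sum
          intro k hk
          apply ENNReal.ofReal_le_ofReal
          have hk2 := (Finset.mem_filter.mp hk).2
          push_neg at hk2
          have hk1 : 1 ≤ k := le_trans (Nat.mul_pos (pow_pos (by norm_num) s) (by omega) : 0 < 2^s*q) hk2
          calc lam k ≤ 2 / k := lam_le k hk1
            _ ≤ 2 / (2 ^ s * q) := by
                apply div_le_div_of_nonneg_left (by norm_num) (by positivity)
                exact_mod_cast hk2
      _ = (F'.filter (fun k => ¬ k < 2 ^ s * q)).card • ENNReal.ofReal (2 / (2 ^ s * q)) := by
          rw [Finset.sum_const]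
      _ ≤ ENNReal.ofReal (2 / 2 ^ s) := by
          rw [nsmul_eq_mul, ← ENNReal.ofReal_natCast, ← ENNReal.ofReal_mul (Nat.cast_nonneg _)]
          apply ENNReal.ofReal_le_ofReal
          have hcc : ((F'.filter (fun k => ¬ k < 2 ^ s * q)).card : ℝ) ≤ (q : ℝ) := by
            exact_mod_cast le_trans (Finset.card_le_card (Finset.filter_subset _ F')) hcard
          calc ((F'.filter (fun k => ¬ k < 2 ^ s * q)).card : ℝ) * (2 / (2 ^ s * q))
              ≤ (q:ℝ) * (2 / (2 ^ s * q)) := by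
                apply mul_le_mul_of_nonneg_right hcc (by positivity)
            _ = 2 / 2 ^ s := by field_simp
  calc _ ≤ ENNReal.ofReal (2 ^ (s+1) * δ) + ENNReal.ofReal (2 / 2 ^ s) := add_le_add hb1 hb2
    _ = ENNReal.ofReal (2 ^ (s+1) * δ + 2 / 2 ^ s) := by
        rw [ENNReal.ofReal_add (by positivity) (by positivity)]


theorem stmt13 : ∀ A : Set ℕ, 0 ∉ A →
    (Tendsto (fun m : ℕ => phi1 (A \ Set.Iio m)) atTop (𝓝 0) ↔
      Tendsto (fun n : ℕ => ((A ∩ Set.Icc 1 n).ncard : ℝ) / n) atTop (𝓝 0)) := by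
  intro A _hA
  constructor
  · -- phi1 tail → 0 implies density → 0
    intro h
    by_contra hnd
    rw [Metric.tendsto_atTop] at hnd
    push_neg at hnd
    obtain ⟨ε, hε, hfreq⟩ := hnd
    set ε' := min ε 1 with hε'def
    have hε'0 : 0 < ε' := lt_min hε one_pos
    have key : ∀ m : ℕ, ENNReal.ofReal (ε' / 8) ≤ phi1 (A \ Set.Iio m) := by
      intro m
      obtain ⟨n, hnN, hn⟩ := hfreq (⌈(8 * ((m:ℝ) + 3)) / ε'⌉₊)
      have hnR : (8 * ((m:ℝ) + 3)) / ε' ≤ n :=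
        le_trans (Nat.le_ceil _) (by exact_mod_cast hnN)
      have h1 : (8 * ((m:ℝ) + 3)) ≤ ε' * n := by
        rw [div_le_iff₀ hε'0] at hnR
        linarith
    -- n > 0
      have hn0 : (0:ℝ) < n := by nlinarith
      have hdist : ε ≤ ((A ∩ Set.Icc 1 n).ncard : ℝ) / n := by
        have := hn
        rw [Real.dist_eq, sub_zero, abs_of_nonneg (by positivity)] at this
        exact this
      have h2 : ε' * n ≤ ((A ∩ Set.Icc 1 n).ncard : ℝ) := by
        have hεε' : ε' ≤ ε := min_le_left _ _
        rw [le_div_iff₀ hn0] at hdist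
        nlinarith
      exact phi1_tail_ge A ε' hε'0 m n h1 (by exact_mod_cast h2)
    obtain ⟨M, hM⟩ := ENNReal.tendsto_atTop_zero.mp h (ENNReal.ofReal (ε' / 16))
      (by simp [ENNReal.ofReal_pos]; linarith)
    have h1 := le_trans (key M) (hM M le_rfl)
    rw [ENNReal.ofReal_le_ofReal_iff (by linarith)] at h1
    linarith
  · -- density → 0 implies phi1 tail → 0
    intro h
    rw [ENNReal.tendsto_atTop_zero]
    intro ε hε
    set r := (min ε 1).toReal with hrdef
    have hmlt : min ε 1 ≠ ⊤ := ne_top_of_le_ne_top (by norm_num) (min_le_right _ _)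
    have hr0 : 0 < r := ENNReal.toReal_pos (lt_min hε (by norm_num)).ne' hmlt
    have hrε : ENNReal.ofReal r ≤ ε := by
      rw [hrdef, ENNReal.ofReal_toReal hmlt]
      exact min_le_left _ _
    obtain ⟨s, hs⟩ := pow_unbounded_of_one_lt (4 / r) (one_lt_two (α := ℝ))
    set δ := r / 2 ^ (s + 2) with hδdef
    have hδ0 : 0 < δ := by positivity
    obtain ⟨N, hN⟩ := Metric.tendsto_atTop.mp h δ hδ0
    have hd : ∀ n, max N 1 ≤ n → ((A ∩ Set.Icc 1 n).ncard : ℝ) ≤ δ * n := by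
      intro n hn
      have hn1 : 1 ≤ n := le_trans (le_max_right _ _) hn
      have hn0 : (0:ℝ) < n := by exact_mod_cast hn1
      have := hN n (le_trans (le_max_left _ _) hn)
      rw [Real.dist_eq, sub_zero, abs_of_nonneg (by positivity), div_lt_iff₀ hn0] at this
      linarith
    refine ⟨max N 1, fun m hm => ?_⟩
    have hm1 : 1 ≤ m := le_trans (le_max_right _ _) hm
    calc phi1 (A \ Set.Iio m) ≤ ENNReal.ofReal (2 ^ (s+1) * δ + 2 / 2 ^ s) :=
          phi1_tail_le A m s (max N 1) δ hδ0.le hm1 hm hd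
      _ ≤ ENNReal.ofReal r := by
          apply ENNReal.ofReal_le_ofReal
          have e1 : (2:ℝ) ^ (s+1) * δ = r / 2 := by
            rw [hδdef]
            field_simp
            ring
          have e2 : (2:ℝ) / 2 ^ s ≤ r / 2 := by
            rw [div_le_div_iff₀ (by positivity) (by norm_num)]
            rw [div_lt_iff₀ hr0] at hs
            nlinarith [pow_pos (show (0:ℝ) < 2 by norm_num) s]
          linarith
      _ ≤ ε := hrε
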